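/- Fix x/b = ρ ∈ [0,1). As β → 0⁺ with b → ∞ such that βb stays bounded, the mean passage time E = (x−b)/β + (e^{βb} − e^{βx})(1/β² + (1/β)∫₀^∞ e^{βu−u²/2} du) satisfies E − β^{−2}(e^{βb} − e^{βx} + β(x−b)) = o(β^{−2} e^{βb}); equivalently E ∼ β^{−2}(e^{βb} − e^{βx} + β(x−b)) in the regime β = O(b^{−1}), x = ρb. -/
import Mathlib


open Real MeasureTheory Set Filter

/-- Mean first passage time expression from Proposition 1 (case `x ≥ 0`). -/
noncomputable def meanFPT (β x b : ℝ) : ℝ :=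
  (x - b) / β +
    (Real.exp (β * b) - Real.exp (β * x)) *
      (1 / β ^ 2 + (1 / β) * ∫ u in Ici (0 : ℝ), Real.exp (β * u - u ^ 2 / 2))

lemma aux_lower (a t : ℝ) (ha : 0 ≤ a) (hat : a ≤ t) :
    (t - a) * (t + a) / 2 ≤ Real.exp t - Real.exp a - (t - a) := by
  have h1 : 1 + a ≤ Real.exp a := by linarith [Real.add_one_le_exp a]
  have h2 : 1 + (t - a) + (t - a) ^ 2 / 2 ≤ Real.exp (t - a) :=
    Real.quadratic_le_exp_of_nonneg (by linarith)
  have h3 : Real.exp t = Real.exp a * Real.exp (t - a) := by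
    rw [← Real.exp_add]; ring_nf
  nlinarith [Real.exp_pos a, Real.exp_pos (t - a), sq_nonneg (t - a)]

lemma aux_upper (a t : ℝ) (hat : a ≤ t) :
    Real.exp t - Real.exp a ≤ Real.exp t * (t - a) := by
  have h1 : (a - t) + 1 ≤ Real.exp (a - t) := Real.add_one_le_exp _
  have h3 : Real.exp a = Real.exp t * Real.exp (a - t) := by
    rw [← Real.exp_add]; ring_nf
  nlinarith [Real.exp_pos t]

lemma key (ρ t M : ℝ) (hρ0 : 0 ≤ ρ) (hρ1 : ρ < 1) (ht : 0 < t) (htM : t ≤ M) :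
    0 < Real.exp t - Real.exp (ρ * t) + (ρ * t - t) ∧
      t * (Real.exp t - Real.exp (ρ * t)) ≤
        2 * Real.exp M * (Real.exp t - Real.exp (ρ * t) + (ρ * t - t)) := by
  set a := ρ * t with ha_def
  have ha : 0 ≤ a := mul_nonneg hρ0 ht.le
  have hat : a < t := by
    have := mul_lt_mul_of_pos_right hρ1 ht
    simpa [ha_def] using this
  have hlow := aux_lower a t ha hat.le
  have hup := aux_upper a t hat.le
  have hpos : 0 < Real.exp t - Real.exp a + (a - t) := by nlinarith
  refine ⟨hpos, ?_⟩
  have hexp : Real.exp t ≤ Real.exp M := Real.exp_le_exp.mpr htM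
  -- t * A ≤ t * exp t * (t - a) and (t - a)*(t + a)/2 ≤ A + (a - t), t ≤ t + a
  nlinarith [Real.exp_pos t, mul_le_mul_of_nonneg_left hup ht.le,
    mul_le_mul_of_nonneg_left hlow (mul_pos (Real.exp_pos t) (by norm_num : (0:ℝ) < 2)).le,
    mul_le_mul_of_nonneg_right hexp (by nlinarith : (0:ℝ) ≤ 2 * (Real.exp t - Real.exp a + (a - t)))]

lemma integrable_kernel (β : ℝ) :
    Integrable (fun u : ℝ => Real.exp (β * u - u ^ 2 / 2)) := by
  have h : (fun u : ℝ => Real.exp (β * u - u ^ 2 / 2)) =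
      fun u : ℝ => Real.exp (β ^ 2 / 2) * Real.exp (-(1/2 : ℝ) * (u - β) ^ 2) := by
    funext u
    rw [← Real.exp_add]
    congr 1
    ring
  rw [h]
  exact ((integrable_exp_neg_mul_sq (by norm_num : (0:ℝ) < 1/2)).comp_sub_right β).const_mul _

theorem stmt_6 (ρ : ℝ) (hρ0 : 0 ≤ ρ) (hρ1 : ρ < 1)
    (β b : ℕ → ℝ)
    (hβpos : ∀ n, 0 < β n)
    (hβ : Filter.Tendsto β Filter.atTop (nhds 0))
    (hb : Filter.Tendsto b Filter.atTop Filter.atTop)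
    (hbound : ∃ M : ℝ, ∀ n, β n * b n ≤ M) :
    Filter.Tendsto
      (fun n : ℕ =>
        meanFPT (β n) (ρ * b n) (b n) /
          ((β n)⁻¹ ^ 2 *
            (Real.exp (β n * b n) - Real.exp (β n * (ρ * b n)) + β n * (ρ * b n - b n))))
      Filter.atTop (nhds 1) := by
  obtain ⟨M₀, hM₀⟩ := hbound
  set M : ℝ := max M₀ 1 with hM_def
  have hM : ∀ n, β n * b n ≤ M := fun n => (hM₀ n).trans (le_max_left _ _)
  set I₁ : ℝ := ∫ u in Ici (0 : ℝ), Real.exp (1 * u - u ^ 2 / 2) with hI₁_def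
  have hI₁0 : 0 ≤ I₁ :=
    setIntegral_nonneg measurableSet_Ici (fun u _ => (Real.exp_pos _).le)
  set K : ℝ := 2 * Real.exp M * I₁ with hK_def
  have hK0 : 0 ≤ K := by positivity
  have hb1 : ∀ᶠ n in atTop, 1 ≤ b n := hb.eventually_ge_atTop 1
  have hβ1 : ∀ᶠ n in atTop, β n ≤ 1 := hβ.eventually_le_const one_pos
  have hmain : ∀ᶠ n in atTop,
      1 ≤ meanFPT (β n) (ρ * b n) (b n) /
            ((β n)⁻¹ ^ 2 *
              (Real.exp (β n * b n) - Real.exp (β n * (ρ * b n)) + β n * (ρ * b n - b n))) ∧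
      meanFPT (β n) (ρ * b n) (b n) /
            ((β n)⁻¹ ^ 2 *
              (Real.exp (β n * b n) - Real.exp (β n * (ρ * b n)) + β n * (ρ * b n - b n)))
        ≤ 1 + K / b n := by
    filter_upwards [hb1, hβ1] with n hbn hβn
    have hβp : 0 < β n := hβpos n
    have hbp : (0:ℝ) < b n := lt_of_lt_of_le one_pos hbn
    have hkey := key ρ (β n * b n) M hρ0 hρ1 (mul_pos hβp hbp) (hM n)
    have e2 : ρ * (β n * b n) - β n * b n = β n * (ρ * b n - b n) := by ring
    have e1 : ρ * (β n * b n) = β n * (ρ * b n) := by ring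
    rw [e2, e1] at hkey
    obtain ⟨hP, hU⟩ := hkey
    have hA0 : 0 ≤ Real.exp (β n * b n) - Real.exp (β n * (ρ * b n)) := by
      have : Real.exp (β n * (ρ * b n)) ≤ Real.exp (β n * b n) :=
        Real.exp_le_exp.mpr (by nlinarith [mul_nonneg (mul_pos hβp hbp).le (by linarith : (0:ℝ) ≤ 1 - ρ)])
      linarith
    set I : ℝ := ∫ u in Ici (0 : ℝ), Real.exp (β n * u - u ^ 2 / 2) with hI_def
    have hI0 : 0 ≤ I :=
      setIntegral_nonneg measurableSet_Ici (fun u _ => (Real.exp_pos _).le)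
    have hII : I ≤ I₁ := by
      rw [hI_def, hI₁_def]
      refine setIntegral_mono_on ((integrable_kernel (β n)).integrableOn)
        ((integrable_kernel 1).integrableOn) measurableSet_Ici ?_
      intro u hu
      have hu0 : (0:ℝ) ≤ u := hu
      exact Real.exp_le_exp.mpr (by nlinarith)
    have hPne : Real.exp (β n * b n) - Real.exp (β n * (ρ * b n)) + β n * (ρ * b n - b n)
        ≠ 0 := ne_of_gt hP
    have hβne : β n ≠ 0 := ne_of_gt hβp
    have hE : meanFPT (β n) (ρ * b n) (b n)
        = (β n)⁻¹ ^ 2 *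
          ((Real.exp (β n * b n) - Real.exp (β n * (ρ * b n)) + β n * (ρ * b n - b n)) +
            β n * (Real.exp (β n * b n) - Real.exp (β n * (ρ * b n))) * I) := by
      rw [meanFPT, ← hI_def]
      field_simp
      ring
    have hquot : meanFPT (β n) (ρ * b n) (b n) /
          ((β n)⁻¹ ^ 2 *
            (Real.exp (β n * b n) - Real.exp (β n * (ρ * b n)) + β n * (ρ * b n - b n)))
        = 1 + β n * (Real.exp (β n * b n) - Real.exp (β n * (ρ * b n))) * I /
            (Real.exp (β n * b n) - Real.exp (β n * (ρ * b n)) + β n * (ρ * b n - b n)) := by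
      rw [hE, mul_div_mul_left _ _ (by positivity : ((β n)⁻¹ ^ 2 : ℝ) ≠ 0),
        add_div, div_self hPne]
    have hr0 : 0 ≤ β n * (Real.exp (β n * b n) - Real.exp (β n * (ρ * b n))) * I /
        (Real.exp (β n * b n) - Real.exp (β n * (ρ * b n)) + β n * (ρ * b n - b n)) :=
      div_nonneg (by positivity) hP.le
    constructor
    · rw [hquot]; linarith
    · rw [hquot]
      have hrK : β n * (Real.exp (β n * b n) - Real.exp (β n * (ρ * b n))) * I /
          (Real.exp (β n * b n) - Real.exp (β n * (ρ * b n)) + β n * (ρ * b n - b n))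
          ≤ K / b n := by
        rw [div_le_div_iff₀ hP hbp]
        have h1 : β n * (Real.exp (β n * b n) - Real.exp (β n * (ρ * b n))) * I * b n
            = ((β n * b n) * (Real.exp (β n * b n) - Real.exp (β n * (ρ * b n)))) * I := by
          ring
        rw [h1]
        calc ((β n * b n) * (Real.exp (β n * b n) - Real.exp (β n * (ρ * b n)))) * I
            ≤ (2 * Real.exp M *
                (Real.exp (β n * b n) - Real.exp (β n * (ρ * b n)) + β n * (ρ * b n - b n)))
                * I₁ := mul_le_mul hU hII hI0 (by positivity)
          _ = K * (Real.exp (β n * b n) - Real.exp (β n * (ρ * b n)) + β n * (ρ * b n - b n)) := by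
              rw [hK_def]; ring
      linarith
  have hupper : Tendsto (fun n => 1 + K / b n) atTop (nhds 1) := by
    have : Tendsto (fun n => K / b n) atTop (nhds 0) :=
      Tendsto.div_atTop tendsto_const_nhds hb
    simpa using tendsto_const_nhds.add this
  refine tendsto_of_tendsto_of_tendsto_of_le_of_le' (tendsto_const_nhds) hupper
    (hmain.mono fun n h => h.1) (hmain.mono fun n h => h.2)
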